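/- Let ξ be a Young measure from ([0,1], ν) to E_X = [x̲, x̄] with x̲, x̄ ∈ ℤ. Define for each n the discretised Young measure ξⁿ by: on each dyadic cell Dₖⁿ = [k2⁻ⁿ, (k+1)2⁻ⁿ) with ν(Dₖⁿ) > 0, ξⁿ(v, ·) is the discrete measure placing mass ν⊗ξ(Dₖⁿ × D_lⁿ)/ν(Dₖⁿ) on the grid point l·2⁻ⁿ for each l, and ξⁿ(v, ·) = δ₀ on null cells. Then ξⁿ → ξ narrowly as n → ∞. -/

import Mathlib

open MeasureTheory ProbabilityTheory Filter

/-- The dyadic cell `[k/2ⁿ, (k+1)/2ⁿ)`. -/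
noncomputable def dyadicCell (n : ℕ) (k : ℤ) : Set ℝ :=
  Set.Ico ((k : ℝ) / 2 ^ n) ((k + 1 : ℤ) / 2 ^ n)

/-!
Write `gₙ(v) = ∫ f(⌊2ⁿx⌋/2ⁿ) ξ(v, dx)`. On a dyadic cell `D` of generation `n` the measure
`ξⁿ(v, ·)` is the `ν`-average over `D` of the grid-rounded measures `ξ(u, ·)`, so
`∫_S ∫ f dξⁿ dν = ∫_S gₙ dν` for every union `S` of dyadic cells of generation at most `n`, and
`gₙ → ∫ f dξ` pointwise by bounded convergence. Unions of dyadic cells form an algebra generating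
the Borel sets, hence approximate every measurable `A` in `ν`-measure; since all integrands are
bounded by `sup |f|`, the convergence passes from these unions to `A`.
-/

open Set Topology
open scoped symmDiff ENNReal

section General

variable {α : Type*} [mα : MeasurableSpace α] {μ : Measure α}

lemma ae_mem_Ico_of_measure_compl_Icc_eq_zero [LinearOrder α] {a b : α}
    (hIcc : μ (Icc a b)ᶜ = 0) (hb : μ {b} = 0) : ∀ᵐ x ∂μ, x ∈ Ico a b := by
  refine measure_mono_null (fun x hx => ?_) (measure_union_null hIcc hb)
  by_cases hxb : x = b
  · exact Or.inr hxb
  · exact Or.inl fun hx' => hx ⟨hx'.1, lt_of_le_of_ne hx'.2 hxb⟩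

lemma abs_integral_le_of_forall_abs_le [IsProbabilityMeasure μ] {f : α → ℝ} {M : ℝ}
    (hf : ∀ x, |f x| ≤ M) : |∫ x, f x ∂μ| ≤ M := by
  simpa using norm_integral_le_of_norm_le_const (μ := μ) (f := f) (ae_of_all _ hf)

lemma tendsto_integral_of_forall_abs_le [IsFiniteMeasure μ] {F : ℕ → α → ℝ} {G : α → ℝ}
    {M : ℝ} (hFm : ∀ n, AEStronglyMeasurable (F n) μ) (hF : ∀ n x, |F n x| ≤ M)
    (hlim : ∀ x, Tendsto (fun n => F n x) atTop (𝓝 (G x))) :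
    Tendsto (fun n => ∫ x, F n x ∂μ) atTop (𝓝 (∫ x, G x ∂μ)) :=
  tendsto_integral_of_dominated_convergence (fun _ => M) hFm (integrable_const M)
    (fun n => ae_of_all _ (hF n)) (ae_of_all _ hlim)

lemma abs_setIntegral_sub_setIntegral_le [IsFiniteMeasure μ] {H : α → ℝ} {M : ℝ}
    (hHm : AEStronglyMeasurable H μ) (hH : ∀ x, |H x| ≤ M) {A S : Set α}
    (hA : MeasurableSet A) (hS : MeasurableSet S) :
    |∫ x in A, H x ∂μ - ∫ x in S, H x ∂μ| ≤ M * μ.real (A ∆ S) := by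
  have hH_int : Integrable H μ := .of_bound hHm M (ae_of_all _ hH)
  have hpt : ∀ x, ‖A.indicator H x - S.indicator H x‖ ≤ (A ∆ S).indicator (fun _ => M) x := by
    intro x
    by_cases hxA : x ∈ A <;> by_cases hxS : x ∈ S <;>
      simp [hxA, hxS, mem_symmDiff, hH x]
  rw [← integral_indicator hA, ← integral_indicator hS,
    ← integral_sub (hH_int.indicator hA) (hH_int.indicator hS), ← Real.norm_eq_abs]
  calc _ ≤ ∫ x, (A ∆ S).indicator (fun _ => M) x ∂μ :=
        norm_integral_le_of_norm_le ((integrable_const M).indicator (hA.symmDiff hS))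
          (ae_of_all _ hpt)
    _ = M * μ.real (A ∆ S) := by
        rw [integral_indicator_const _ (hA.symmDiff hS), smul_eq_mul, mul_comm]

theorem tendsto_setIntegral_of_forall_measureReal_symmDiff_lt [IsFiniteMeasure μ]
    {F : ℕ → α → ℝ} {G : α → ℝ} {M : ℝ}
    (hFm : ∀ n, AEStronglyMeasurable (F n) μ) (hF : ∀ n x, |F n x| ≤ M)
    (hGm : AEStronglyMeasurable G μ) (hG : ∀ x, |G x| ≤ M) {A : Set α} (hA : MeasurableSet A)
    (happrox : ∀ ε > 0, ∃ S, MeasurableSet S ∧ μ.real (A ∆ S) < ε ∧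
      Tendsto (fun n => ∫ x in S, F n x ∂μ) atTop (𝓝 (∫ x in S, G x ∂μ))) :
    Tendsto (fun n => ∫ x in A, F n x ∂μ) atTop (𝓝 (∫ x in A, G x ∂μ)) := by
  rw [Metric.tendsto_atTop]
  intro ε hε
  obtain ⟨δ, hδ, hMδ⟩ := exists_pos_mul_lt (by positivity : 0 < ε / 3) |M|
  obtain ⟨S, hS, hAS, hlim⟩ := happrox δ hδ
  have hsmall : M * μ.real (A ∆ S) < ε / 3 :=
    calc M * μ.real (A ∆ S) ≤ |M| * δ := by
          gcongr
          exact le_abs_self M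
      _ < ε / 3 := hMδ
  obtain ⟨N, hN⟩ := Metric.tendsto_atTop.1 hlim (ε / 3) (by positivity)
  refine ⟨N, fun n hn => ?_⟩
  have hF_AS := abs_le.1 (abs_setIntegral_sub_setIntegral_le (hFm n) (hF n) hA hS)
  have hG_AS := abs_le.1 (abs_setIntegral_sub_setIntegral_le hGm hG hA hS)
  have hFG_S := abs_lt.1 (Real.dist_eq _ _ ▸ hN n hn)
  rw [Real.dist_eq, abs_lt]
  constructor <;> linarith [hF_AS.1, hF_AS.2, hG_AS.1, hG_AS.2, hFG_S.1, hFG_S.2]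

lemma exists_measurableSet_measureReal_symmDiff_lt_of_monotone [IsFiniteMeasure μ]
    {m : ℕ → MeasurableSpace α} (hm : Monotone m) (hsup : ⨆ n, m n = mα) {A : Set α}
    (hA : MeasurableSet A) {ε : ℝ} (hε : 0 < ε) :
    ∃ n S, MeasurableSet[m n] S ∧ μ.real (A ∆ S) < ε := by
  have hC : IsSetAlgebra {s : Set α | ∃ n, MeasurableSet[m n] s} :=
    { empty_mem := ⟨0, @MeasurableSet.empty _ (m 0)⟩
      compl_mem := fun _ ⟨n, hs⟩ => ⟨n, hs.compl⟩
      union_mem := fun s t ⟨i, hs⟩ ⟨j, ht⟩ =>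
        ⟨max i j, (hm (le_max_left i j) s hs).union (hm (le_max_right i j) t ht)⟩ }
  have hgen : mα = MeasurableSpace.generateFrom {s : Set α | ∃ n, MeasurableSet[m n] s} := by
    rw [ofPred_exists, ← hsup, ← MeasurableSpace.generateFrom_iUnion_measurableSet]
  obtain ⟨S, ⟨n, hS⟩, hSA⟩ := exists_measure_symmDiff_lt_of_generateFrom_isSetRing (μ := μ)
    hC.isSetRing ⟨{univ}, countable_singleton _, singleton_subset_iff.2 hC.univ_mem, by simp⟩ hgen hA
    (ENNReal.ofReal_pos.2 hε)
  exact ⟨n, S, hS, symmDiff_comm S A ▸ ENNReal.toReal_lt_of_lt_ofReal hSA⟩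

lemma setIntegral_preimage_eq_of_forall_setIntegral_fiber_eq {ι : Type*} [Countable ι]
    [MeasurableSpace ι] [MeasurableSingletonClass ι] {E : Type*} [NormedAddCommGroup E]
    [NormedSpace ℝ E] {q : α → ι} (hq : Measurable q) {F G : α → E} (hF : Integrable F μ)
    (hG : Integrable G μ) (h : ∀ k, ∫ x in q ⁻¹' {k}, F x ∂μ = ∫ x in q ⁻¹' {k}, G x ∂μ)
    (T : Set ι) : ∫ x in q ⁻¹' T, F x ∂μ = ∫ x in q ⁻¹' T, G x ∂μ := by
  have hT : q ⁻¹' T = ⋃ k : T, q ⁻¹' {(k : ι)} := by ext; simp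
  have hmeas : ∀ k : T, MeasurableSet (q ⁻¹' {(k : ι)}) := fun k => hq (measurableSet_singleton _)
  have hdisj : Pairwise (Function.onFun Disjoint fun k : T => q ⁻¹' {(k : ι)}) := fun i j hij =>
    (disjoint_singleton.2 (Subtype.coe_injective.ne hij)).preimage q
  rw [hT, integral_iUnion hmeas hdisj hF.integrableOn, integral_iUnion hmeas hdisj hG.integrableOn]
  exact tsum_congr fun k => h k

lemma integral_comp_eq_sum_of_ae_mem [IsFiniteMeasure μ] {ι : Type*} [Countable ι]
    [MeasurableSpace ι] [MeasurableSingletonClass ι] {q : α → ι} (hq : Measurable q)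
    {s : Finset ι} (hs : ∀ᵐ x ∂μ, q x ∈ s) (φ : ι → ℝ) :
    ∫ x, φ (q x) ∂μ = ∑ l ∈ s, μ.real (q ⁻¹' {l}) * φ l := by
  have hs' : ∀ᵐ l ∂μ.map q, l ∈ (s : Set ι) := (ae_map_iff hq.aemeasurable
    (s.finite_toSet.measurableSet)).2 hs
  rw [← integral_map hq.aemeasurable (measurable_of_countable φ).aestronglyMeasurable,
    ← Measure.restrict_eq_self_of_ae_mem hs', setIntegral_finset s IntegrableOn.finset]
  simp_rw [map_measureReal_apply hq (measurableSet_singleton _), smul_eq_mul]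

lemma integral_finsetSum_smul_dirac [MeasurableSingletonClass α] {ι : Type*} (s : Finset ι)
    {w : ι → ℝ≥0∞} (hw : ∀ i ∈ s, w i ≠ ∞) (a : ι → α) (f : α → ℝ) :
    ∫ x, f x ∂(∑ i ∈ s, w i • Measure.dirac (a i)) = ∑ i ∈ s, (w i).toReal * f (a i) := by
  rw [integral_finsetSum_measure fun i hi =>
    (integrable_dirac enorm_lt_top).smul_measure (hw i hi)]
  simp_rw [integral_smul_measure, integral_dirac, smul_eq_mul]

lemma setIntegral_measureReal_eq_compProd_measureReal {β : Type*} [MeasurableSpace β]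
    [SFinite μ] {κ : Kernel α β} [IsFiniteKernel κ] {s : Set α} {t : Set β}
    (hs : MeasurableSet s) (ht : MeasurableSet t) :
    ∫ a in s, (κ a).real t ∂μ = (μ ⊗ₘ κ).real (s ×ˢ t) := by
  rw [measureReal_def, Measure.compProd_apply_prod hs ht]
  exact integral_toReal (κ.measurable_coe ht).aemeasurable (ae_of_all _ fun _ => measure_lt_top _ _)

end General

lemma mem_dyadicCell_iff {n : ℕ} {k : ℤ} {v : ℝ} :
    v ∈ dyadicCell n k ↔ ⌊(2 : ℝ) ^ n * v⌋ = k := by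
  rw [dyadicCell, mem_Ico, Int.floor_eq_iff, div_le_iff₀' (by positivity),
    lt_div_iff₀' (by positivity)]
  push_cast
  rfl

lemma dyadicCell_eq_preimage (n : ℕ) (k : ℤ) :
    dyadicCell n k = (fun v : ℝ => ⌊(2 : ℝ) ^ n * v⌋) ⁻¹' {k} :=
  ext fun _ => mem_dyadicCell_iff

lemma measurable_floor_two_pow_mul (n : ℕ) : Measurable fun v : ℝ => ⌊(2 : ℝ) ^ n * v⌋ :=
  (measurable_const_mul _).floor

lemma measurable_floor_two_pow_mul_div (n : ℕ) :
    Measurable fun x : ℝ => (⌊(2 : ℝ) ^ n * x⌋ : ℝ) / 2 ^ n :=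
  (measurable_of_countable fun k : ℤ => (k : ℝ) / 2 ^ n).comp (measurable_floor_two_pow_mul n)

lemma floor_two_pow_mul_eq_div {m n : ℕ} (hmn : m ≤ n) (v : ℝ) :
    ⌊(2 : ℝ) ^ m * v⌋ = ⌊(2 : ℝ) ^ n * v⌋ / 2 ^ (n - m) := by
  obtain ⟨d, rfl⟩ := Nat.exists_eq_add_of_le hmn
  have h := Int.floor_div_natCast ((2 : ℝ) ^ (m + d) * v) (2 ^ d)
  push_cast at h
  rw [Nat.add_sub_cancel_left, ← h, pow_add]
  congr 1
  field_simp

lemma floor_two_pow_mul_mem_Ico_iff {n : ℕ} {a b : ℤ} {x : ℝ} :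
    ⌊(2 : ℝ) ^ n * x⌋ ∈ Finset.Ico (a * 2 ^ n) (b * 2 ^ n) ↔ x ∈ Ico (a : ℝ) b := by
  have h2n : (0 : ℝ) < 2 ^ n := by positivity
  rw [Finset.mem_Ico, Int.le_floor, Int.floor_lt, mem_Ico]
  push_cast
  rw [mul_comm (a : ℝ), mul_comm (b : ℝ), mul_le_mul_iff_right₀ h2n, mul_lt_mul_iff_right₀ h2n]

lemma tendsto_floor_two_pow_mul_div (x : ℝ) :
    Tendsto (fun n : ℕ => (⌊(2 : ℝ) ^ n * x⌋ : ℝ) / 2 ^ n) atTop (𝓝 x) := by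
  have hlow : Tendsto (fun n : ℕ => x - (1 / 2 : ℝ) ^ n) atTop (𝓝 x) := by
    simpa using tendsto_const_nhds.sub
      (tendsto_pow_atTop_nhds_zero_of_lt_one (by norm_num : (0 : ℝ) ≤ 1 / 2) (by norm_num))
  refine tendsto_of_tendsto_of_tendsto_of_le_of_le hlow tendsto_const_nhds (fun n => ?_)
    (fun n => ?_)
  · have h := Int.sub_one_lt_floor ((2 : ℝ) ^ n * x)
    rw [le_div_iff₀ (by positivity), sub_mul, one_div_pow, one_div, inv_mul_cancel₀ (by positivity),
      mul_comm]
    linarith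
  · rw [div_le_iff₀' (by positivity)]
    exact Int.floor_le _

noncomputable abbrev dyadicSigma (n : ℕ) : MeasurableSpace ℝ :=
  MeasurableSpace.comap (fun v : ℝ => ⌊(2 : ℝ) ^ n * v⌋) ⊤

lemma monotone_dyadicSigma : Monotone dyadicSigma := by
  intro m n hmn
  have h : (fun v : ℝ => ⌊(2 : ℝ) ^ m * v⌋) =
      (fun k : ℤ => k / 2 ^ (n - m)) ∘ fun v : ℝ => ⌊(2 : ℝ) ^ n * v⌋ :=
    funext (floor_two_pow_mul_eq_div hmn)
  rw [dyadicSigma, dyadicSigma, h, ← MeasurableSpace.comap_comp]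
  exact MeasurableSpace.comap_mono le_top

lemma dyadicSigma_le (n : ℕ) : dyadicSigma n ≤ Real.measurableSpace :=
  (measurable_floor_two_pow_mul n).comap_le

lemma iSup_dyadicSigma : ⨆ n, dyadicSigma n = Real.measurableSpace := by
  refine le_antisymm (iSup_le dyadicSigma_le) ?_
  rw [BorelSpace.measurable_eq (α := ℝ), borel_eq_generateFrom_Iio]
  refine MeasurableSpace.generateFrom_le ?_
  rintro _ ⟨a, rfl⟩
  have hIio : Iio a = ⋃ n : ℕ,
      (fun v : ℝ => ⌊(2 : ℝ) ^ n * v⌋) ⁻¹' {k : ℤ | (k + 1 : ℝ) ≤ 2 ^ n * a} := by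
    ext v
    simp only [mem_Iio, mem_iUnion, mem_preimage, mem_ofPred_eq]
    constructor
    · intro hva
      obtain ⟨n, hn⟩ := pow_unbounded_of_one_lt (1 / (a - v)) (one_lt_two (α := ℝ))
      refine ⟨n, ?_⟩
      rw [div_lt_iff₀ (sub_pos.2 hva)] at hn
      nlinarith [Int.floor_le ((2 : ℝ) ^ n * v)]
    · rintro ⟨n, hn⟩
      have h := Int.lt_floor_add_one ((2 : ℝ) ^ n * v)
      exact lt_of_mul_lt_mul_left (h.trans_le hn) (by positivity)
  rw [hIio]
  exact MeasurableSet.iUnion fun n => le_iSup dyadicSigma n _ ⟨_, trivial, rfl⟩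

lemma exists_dyadicSigma_measureReal_symmDiff_lt (μ : Measure ℝ) [IsFiniteMeasure μ]
    {A : Set ℝ} (hA : MeasurableSet A) {ε : ℝ} (hε : 0 < ε) :
    ∃ n S, MeasurableSet[dyadicSigma n] S ∧ μ.real (A ∆ S) < ε :=
  exists_measurableSet_measureReal_symmDiff_lt_of_monotone monotone_dyadicSigma iSup_dyadicSigma
    hA hε

lemma integral_comp_floor_two_pow_mul_eq_sum {μ : Measure ℝ} [IsFiniteMeasure μ] {a b : ℤ}
    (h : ∀ᵐ x ∂μ, x ∈ Ico (a : ℝ) b) (n : ℕ) (f : ℝ → ℝ) :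
    ∫ x, f (⌊(2 : ℝ) ^ n * x⌋ / 2 ^ n) ∂μ =
      ∑ l ∈ Finset.Ico (a * 2 ^ n) (b * 2 ^ n), μ.real (dyadicCell n l) * f (l / 2 ^ n) := by
  simp_rw [dyadicCell_eq_preimage]
  exact integral_comp_eq_sum_of_ae_mem (measurable_floor_two_pow_mul n)
    (h.mono fun _ hx => floor_two_pow_mul_mem_Ico_iff.2 hx) fun l : ℤ => f (l / 2 ^ n)

lemma tendsto_integral_integral_comp_floor_two_pow_mul_div {μ : Measure ℝ} [IsFiniteMeasure μ]
    {κ : Kernel ℝ ℝ} [IsMarkovKernel κ] {f : ℝ → ℝ} (hf : Continuous f) {M : ℝ}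
    (hM : ∀ x, |f x| ≤ M) :
    Tendsto (fun n : ℕ => ∫ v, ∫ x, f (⌊(2 : ℝ) ^ n * x⌋ / 2 ^ n) ∂κ v ∂μ) atTop
      (𝓝 (∫ v, ∫ x, f x ∂κ v ∂μ)) := by
  have hround : ∀ n : ℕ, Measurable fun x : ℝ => f (⌊(2 : ℝ) ^ n * x⌋ / 2 ^ n) :=
    fun n => hf.measurable.comp (measurable_floor_two_pow_mul_div n)
  refine tendsto_integral_of_forall_abs_le
    (fun n => (hround n).stronglyMeasurable.integral_kernel.aestronglyMeasurable)
    (fun n v => abs_integral_le_of_forall_abs_le fun x => hM _) fun v => ?_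
  exact tendsto_integral_of_forall_abs_le (fun n => (hround n).aestronglyMeasurable)
    (fun n x => hM _) fun x => (hf.tendsto x).comp (tendsto_floor_two_pow_mul_div x)

section Discretisation

variable {ν : Measure ℝ} [IsFiniteMeasure ν] {κ : Kernel ℝ ℝ} [IsMarkovKernel κ] {xlo xhi : ℤ}

lemma setIntegral_dyadicCell_integral_comp_floor_eq_sum
    (hκ : ∀ v, ∀ᵐ x ∂κ v, x ∈ Ico (xlo : ℝ) xhi) (n : ℕ) (k : ℤ) (f : ℝ → ℝ) :
    ∫ v in dyadicCell n k, ∫ x, f (⌊(2 : ℝ) ^ n * x⌋ / 2 ^ n) ∂κ v ∂ν =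
      ∑ l ∈ Finset.Ico (xlo * 2 ^ n) (xhi * 2 ^ n),
        (ν ⊗ₘ κ).real (dyadicCell n k ×ˢ dyadicCell n l) * f (l / 2 ^ n) := by
  have hcell : ∀ l, MeasurableSet (dyadicCell n l) := fun _ => measurableSet_Ico
  simp_rw [integral_comp_floor_two_pow_mul_eq_sum (hκ _)]
  rw [integral_finsetSum]
  · refine Finset.sum_congr rfl fun l _ => ?_
    rw [integral_mul_const, setIntegral_measureReal_eq_compProd_measureReal (hcell k) (hcell l)]
  · intro l _
    refine Integrable.mul_const (.of_bound ?_ 1 (ae_of_all _ fun v => ?_)) _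
    · exact (κ.measurable_coe (hcell l)).ennreal_toReal.aestronglyMeasurable
    · rw [Real.norm_eq_abs, abs_of_nonneg measureReal_nonneg]
      exact measureReal_le_one

def IsDyadicDiscretisation (ν : Measure ℝ) (κ : Kernel ℝ ℝ) (xlo xhi : ℤ) (n : ℕ)
    (K : Kernel ℝ ℝ) : Prop :=
  ∀ v ∈ Ico (0 : ℝ) 1, ν (dyadicCell n ⌊(2 : ℝ) ^ n * v⌋) ≠ 0 →
    K v = ∑ l ∈ Finset.Ico (xlo * 2 ^ n) (xhi * 2 ^ n),
      ((ν ⊗ₘ κ) (dyadicCell n ⌊(2 : ℝ) ^ n * v⌋ ×ˢ dyadicCell n l) /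
        ν (dyadicCell n ⌊(2 : ℝ) ^ n * v⌋)) • Measure.dirac ((l : ℝ) / 2 ^ n)

variable {K : Kernel ℝ ℝ}

lemma setIntegral_dyadicCell_discretisation_eq (hν : ∀ᵐ v ∂ν, v ∈ Ico (0 : ℝ) 1)
    (hκ : ∀ v, ∀ᵐ x ∂κ v, x ∈ Ico (xlo : ℝ) xhi) {n : ℕ}
    (hK : IsDyadicDiscretisation ν κ xlo xhi n K)
    (k : ℤ) (f : ℝ → ℝ) :
    ∫ v in dyadicCell n k, ∫ x, f x ∂K v ∂ν =
      ∫ v in dyadicCell n k, ∫ x, f (⌊(2 : ℝ) ^ n * x⌋ / 2 ^ n) ∂κ v ∂ν := by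
  by_cases hk : ν (dyadicCell n k) = 0
  · simp [Measure.restrict_eq_zero.2 hk]
  rw [setIntegral_dyadicCell_integral_comp_floor_eq_sum hκ]
  have hconst : ∀ᵐ v ∂ν.restrict (dyadicCell n k), ∫ x, f x ∂K v =
      ∑ l ∈ Finset.Ico (xlo * 2 ^ n) (xhi * 2 ^ n),
        ((ν ⊗ₘ κ) (dyadicCell n k ×ˢ dyadicCell n l) / ν (dyadicCell n k)).toReal *
          f (l / 2 ^ n) := by
    filter_upwards [ae_restrict_mem measurableSet_Ico, ae_restrict_of_ae hν] with v hvk hv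
    rw [mem_dyadicCell_iff] at hvk
    have hKv := hK v hv (hvk ▸ hk)
    rw [hvk] at hKv
    rw [hKv, integral_finsetSum_smul_dirac _
      (fun l _ => ENNReal.div_ne_top (measure_ne_top _ _) hk)]
  rw [integral_congr_ae hconst, setIntegral_const, smul_eq_mul, Finset.mul_sum]
  refine Finset.sum_congr rfl fun l _ => ?_
  rw [ENNReal.toReal_div, measureReal_def, measureReal_def]
  field_simp [ENNReal.toReal_ne_zero.2 ⟨hk, measure_ne_top _ _⟩]

lemma setIntegral_discretisation_eq_of_measurableSet_dyadicSigma [IsMarkovKernel K]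
    (hν : ∀ᵐ v ∂ν, v ∈ Ico (0 : ℝ) 1)
    (hκ : ∀ v, ∀ᵐ x ∂κ v, x ∈ Ico (xlo : ℝ) xhi) {n : ℕ}
    (hK : IsDyadicDiscretisation ν κ xlo xhi n K)
    {f : ℝ → ℝ} (hf : Measurable f) {M : ℝ} (hM : ∀ x, |f x| ≤ M)
    {S : Set ℝ} (hS : MeasurableSet[dyadicSigma n] S) :
    ∫ v in S, ∫ x, f x ∂K v ∂ν = ∫ v in S, ∫ x, f (⌊(2 : ℝ) ^ n * x⌋ / 2 ^ n) ∂κ v ∂ν := by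
  obtain ⟨T, -, rfl⟩ := MeasurableSpace.measurableSet_comap.1 hS
  have hround : Measurable fun x : ℝ => f (⌊(2 : ℝ) ^ n * x⌋ / 2 ^ n) :=
    hf.comp (measurable_floor_two_pow_mul_div n)
  refine setIntegral_preimage_eq_of_forall_setIntegral_fiber_eq
    (measurable_floor_two_pow_mul n) ?_ ?_ (fun k => ?_) T
  · exact .of_bound hf.stronglyMeasurable.integral_kernel.aestronglyMeasurable M
      (ae_of_all _ fun v => abs_integral_le_of_forall_abs_le hM)
  · exact .of_bound hround.stronglyMeasurable.integral_kernel.aestronglyMeasurable M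
      (ae_of_all _ fun v => abs_integral_le_of_forall_abs_le fun x => hM _)
  · rw [← dyadicCell_eq_preimage]
    exact setIntegral_dyadicCell_discretisation_eq hν hκ hK k f

end Discretisation

theorem discretised_young_measure_narrow_convergence_general
    (xlo xhi : ℤ)
    (ν : Measure ℝ) [IsProbabilityMeasure ν]
    (hν : ν (Set.Icc (0 : ℝ) 1)ᶜ = 0) (hν1 : ν {(1 : ℝ)} = 0)
    (κ : Kernel ℝ ℝ) [IsMarkovKernel κ]
    (hsupp : ∀ v, (κ v) (Set.Icc (xlo : ℝ) (xhi : ℝ))ᶜ = 0)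
    (htop : ∀ v, (κ v) {(xhi : ℝ)} = 0)
    (κn : ℕ → Kernel ℝ ℝ) [∀ n, IsMarkovKernel (κn n)]
    (hdisc : ∀ (n : ℕ) (v : ℝ), v ∈ Set.Ico (0 : ℝ) 1 →
      (ν (dyadicCell n ⌊(2 : ℝ) ^ n * v⌋) ≠ 0 →
        κn n v = ∑ l ∈ Finset.Ico (xlo * 2 ^ n) (xhi * 2 ^ n),
          (((ν ⊗ₘ κ) ((dyadicCell n ⌊(2 : ℝ) ^ n * v⌋) ×ˢ (dyadicCell n l))) /
            ν (dyadicCell n ⌊(2 : ℝ) ^ n * v⌋)) • Measure.dirac ((l : ℝ) / 2 ^ n)) ∧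
      (ν (dyadicCell n ⌊(2 : ℝ) ^ n * v⌋) = 0 → κn n v = Measure.dirac 0)) :
    ∀ A : Set ℝ, MeasurableSet A → ∀ f : ℝ → ℝ, Continuous f →
      (∃ M, ∀ x, |f x| ≤ M) →
      Tendsto (fun n => ∫ v in A, ∫ x, f x ∂(κn n v) ∂ν) atTop
        (nhds (∫ v in A, ∫ x, f x ∂(κ v) ∂ν)) := by
  intro A hA f hf ⟨M, hM⟩
  have hν01 := ae_mem_Ico_of_measure_compl_Icc_eq_zero hν hν1
  have hκ := fun v => ae_mem_Ico_of_measure_compl_Icc_eq_zero (hsupp v) (htop v)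
  refine tendsto_setIntegral_of_forall_measureReal_symmDiff_lt
    (fun n => hf.stronglyMeasurable.integral_kernel.aestronglyMeasurable)
    (fun n v => abs_integral_le_of_forall_abs_le hM)
    hf.stronglyMeasurable.integral_kernel.aestronglyMeasurable
    (fun v => abs_integral_le_of_forall_abs_le hM) hA fun ε hε => ?_
  obtain ⟨m, S, hSm, hAS⟩ := exists_dyadicSigma_measureReal_symmDiff_lt ν hA hε
  refine ⟨S, dyadicSigma_le m S hSm, hAS, ?_⟩
  refine (tendsto_integral_integral_comp_floor_two_pow_mul_div hf hM).congr'
    (eventually_atTop.2 ⟨m, fun n hmn => ?_⟩)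
  exact (setIntegral_discretisation_eq_of_measurableSet_dyadicSigma hν01 hκ
    (fun v hv => (hdisc n v hv).1) hf.measurable hM (monotone_dyadicSigma hmn S hSm)).symm

/-- The piecewise-constant dyadic discretisation of a Young measure converges
narrowly to the original Young measure. -/
theorem discretised_young_measure_narrow_convergence
    (xlo xhi : ℤ) (hx : xlo < xhi)
    (ν : Measure ℝ) [IsProbabilityMeasure ν]
    (hν : ν (Set.Icc (0 : ℝ) 1)ᶜ = 0) (hν1 : ν {(1 : ℝ)} = 0)
    (κ : Kernel ℝ ℝ) [IsMarkovKernel κ]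
    (hsupp : ∀ v, (κ v) (Set.Icc (xlo : ℝ) (xhi : ℝ))ᶜ = 0)
    (htop : ∀ v, (κ v) {(xhi : ℝ)} = 0)
    (κn : ℕ → Kernel ℝ ℝ) [∀ n, IsMarkovKernel (κn n)]
    (hdisc : ∀ (n : ℕ) (v : ℝ), v ∈ Set.Ico (0 : ℝ) 1 →
      (ν (dyadicCell n ⌊(2 : ℝ) ^ n * v⌋) ≠ 0 →
        κn n v = ∑ l ∈ Finset.Ico (xlo * 2 ^ n) (xhi * 2 ^ n),
          (((ν ⊗ₘ κ) ((dyadicCell n ⌊(2 : ℝ) ^ n * v⌋) ×ˢ (dyadicCell n l))) /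
            ν (dyadicCell n ⌊(2 : ℝ) ^ n * v⌋)) • Measure.dirac ((l : ℝ) / 2 ^ n)) ∧
      (ν (dyadicCell n ⌊(2 : ℝ) ^ n * v⌋) = 0 → κn n v = Measure.dirac 0)) :
    ∀ A : Set ℝ, MeasurableSet A → ∀ f : ℝ → ℝ, Continuous f →
      (∃ M, ∀ x, |f x| ≤ M) →
      Tendsto (fun n => ∫ v in A, ∫ x, f x ∂(κn n v) ∂ν) atTop
        (nhds (∫ v in A, ∫ x, f x ∂(κ v) ∂ν)) :=
  discretised_young_measure_narrow_convergence_general xlo xhi ν hν hν1 κ hsupp htop κn hdisc
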